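/- Let $s \in \mathbb{N}$ and $\nu \in \mathbb{N}_0^s$ be a multi-index. Then $\sum_{m \le \nu} \binom{\nu}{m}\, \frac{(|m|+1)!}{(\ln 2)^{|m|}} \le 2\, \frac{(|\nu|+1)!}{(\ln 2)^{|\nu|}}$, where the sum is over all multi-indices $m \in \mathbb{N}_0^s$ with $m_j \le \nu_j$ for all $j$. -/

import Mathlib

/-!
Grouping the multi-indices `m ≤ ν` by `k = |m|` and applying the multivariate Vandermonde
identity `∑_{|m| = k} ∏ⱼ (νⱼ choose mⱼ) = (|ν| choose k)` (read off the coefficient of `X^k` in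
`∏ⱼ (X + 1)^νⱼ = (X + 1)^|ν|`) reduces the claim to one variable, `n = |ν|`. There
`(n choose k) (k+1)! (n-k)! ≤ (n+1)!` bounds the `k`-th term by `L^(n-k)/(n-k)! · (n+1)!/L^n`,
and the sum of the first factors is a partial sum of `exp L`, which is `2` for `L = ln 2`.
-/

open Finset Nat Polynomial

section MultiIndex

variable {ι : Type*} [Fintype ι] [DecidableEq ι]

theorem X_add_one_pow_eq_sum_Iic {R : Type*} [CommSemiring R] (n : ℕ) :
    ((X : R[X]) + 1) ^ n = ∑ i ∈ Iic n, (n.choose i : R[X]) * X ^ i := by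
  simp [add_pow, ← Nat.range_succ_eq_Iic, mul_comm]

theorem X_add_one_pow_sum_eq_sum_Iic_prod_choose {R : Type*} [CommSemiring R] (ν : ι → ℕ) :
    ((X : R[X]) + 1) ^ (∑ j, ν j)
      = ∑ m ∈ Iic ν, (∏ j, ((ν j).choose (m j) : R[X])) * X ^ (∑ j, m j) := by
  simp_rw [← prod_pow_eq_pow_sum, X_add_one_pow_eq_sum_Iic, prod_univ_sum]
  refine sum_congr rfl fun m _ => ?_
  rw [prod_mul_distrib, prod_pow_eq_pow_sum]

theorem sum_filter_prod_choose_eq_choose_sum (ν : ι → ℕ) (k : ℕ) :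
    ∑ m ∈ Iic ν with ∑ j, m j = k, ∏ j, (ν j).choose (m j) = (∑ j, ν j).choose k := by
  have := congrArg (coeff · k) (X_add_one_pow_sum_eq_sum_Iic_prod_choose (R := ℕ) ν)
  simp_rw [coeff_X_add_one_pow, finsetSum_coeff, ← C_eq_natCast, ← map_prod, coeff_C_mul,
    coeff_X_pow, mul_ite, mul_one, mul_zero, ← sum_filter] at this
  simpa [eq_comm] using this.symm

theorem sum_Iic_prod_choose_mul_eq_sum_range {R : Type*} [CommSemiring R] (ν : ι → ℕ)
    (f : ℕ → R) :
    ∑ m ∈ Iic ν, (∏ j, ((ν j).choose (m j) : R)) * f (∑ j, m j)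
      = ∑ k ∈ range (∑ j, ν j + 1), ((∑ j, ν j).choose k : R) * f k := by
  have hmaps : ∀ m ∈ Iic ν, ∑ j, m j ∈ range (∑ j, ν j + 1) := fun m hm =>
    mem_range_succ_iff.mpr (sum_le_sum fun j _ => mem_Iic.mp hm j)
  rw [← sum_fiberwise_of_maps_to hmaps]
  refine sum_congr rfl fun k _ => ?_
  rw [← sum_filter_prod_choose_eq_choose_sum ν k, Nat.cast_sum, sum_mul]
  refine sum_congr rfl fun m hm => ?_
  rw [(mem_filter.mp hm).2, Nat.cast_prod]

end MultiIndex

theorem choose_mul_factorial_succ_mul_factorial_sub_le (n k : ℕ) :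
    n.choose k * (k + 1)! * (n - k)! ≤ (n + 1)! := by
  rcases le_or_gt k n with hkn | hnk
  · calc n.choose k * (k + 1)! * (n - k)!
        = (k + 1) * (n.choose k * k ! * (n - k)!) := by rw [factorial_succ]; ring
      _ = (k + 1) * n ! := by rw [choose_mul_factorial_mul_factorial hkn]
      _ ≤ (n + 1)! := by rw [factorial_succ]; gcongr
  · simp [choose_eq_zero_of_lt hnk]

theorem choose_mul_factorial_succ_div_pow_le {x : ℝ} (hx : 0 < x) {n k : ℕ} (hkn : k ≤ n) :
    n.choose k * ((k + 1)! / x ^ k : ℝ) ≤ x ^ (n - k) / (n - k)! * ((n + 1)! / x ^ n) := by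
  have hsplit : x ^ n = x ^ (n - k) * x ^ k := by rw [← pow_add, Nat.sub_add_cancel hkn]
  have hrhs : x ^ (n - k) / (n - k)! * ((n + 1)! / x ^ n) = (n + 1)! / (n - k)! / x ^ k := by
    rw [hsplit]
    field_simp
  rw [hrhs, ← mul_div_assoc, div_le_div_iff_of_pos_right (by positivity),
    le_div_iff₀ (by positivity)]
  exact_mod_cast choose_mul_factorial_succ_mul_factorial_sub_le n k

theorem sum_range_choose_mul_factorial_succ_div_pow_le {x : ℝ} (hx : 0 < x) (n : ℕ) :
    ∑ k ∈ range (n + 1), n.choose k * ((k + 1)! / x ^ k : ℝ)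
      ≤ Real.exp x * ((n + 1)! / x ^ n) :=
  calc ∑ k ∈ range (n + 1), n.choose k * ((k + 1)! / x ^ k : ℝ)
      ≤ ∑ k ∈ range (n + 1), x ^ (n - k) / (n - k)! * ((n + 1)! / x ^ n) :=
        sum_le_sum fun k hk => choose_mul_factorial_succ_div_pow_le hx (mem_range_succ_iff.mp hk)
    _ = (∑ j ∈ range (n + 1), x ^ j / j !) * ((n + 1)! / x ^ n) := by
        rw [← sum_mul, ← sum_range_reflect (fun j => x ^ j / (j ! : ℝ))]
        simp
    _ ≤ Real.exp x * ((n + 1)! / x ^ n) := by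
        gcongr
        exact Real.sum_le_exp_of_nonneg hx.le _

/-- Multi-index estimate (equation (counting4) in the paper):
`∑_{m ≤ ν} (ν choose m) * (|m|+1)! / (ln 2)^{|m|} ≤ 2 * (|ν|+1)! / (ln 2)^{|ν|}`,
where the sum is over all multi-indices `m : Fin s → ℕ` with `m ≤ ν`. -/
theorem sum_multichoose_factorial_succ_log2_le_two (s : ℕ) (ν : Fin s → ℕ) :
    ∑ m ∈ Finset.Iic ν,
        (∏ j, (Nat.choose (ν j) (m j) : ℝ)) *
          (Nat.factorial ((∑ j, m j) + 1) : ℝ) / Real.log 2 ^ (∑ j, m j)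
      ≤ 2 * (Nat.factorial ((∑ j, ν j) + 1) : ℝ) / Real.log 2 ^ (∑ j, ν j) := by
  have hlog : 0 < Real.log 2 := Real.log_pos one_lt_two
  simp_rw [mul_div_assoc,
    sum_Iic_prod_choose_mul_eq_sum_range ν fun k => (k + 1)! / Real.log 2 ^ k]
  calc _ ≤ Real.exp (Real.log 2) * ((∑ j, ν j + 1)! / Real.log 2 ^ ∑ j, ν j) :=
        sum_range_choose_mul_factorial_succ_div_pow_le hlog _
    _ = _ := by rw [Real.exp_log two_pos]
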